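/- For any hypothesis g in a symmetric hypothesis space H, the equal opportunity distance in the target domain satisfies Δ_{EOp,T}(g) ≤ Δ_{EOp,S}(g) + (1/2) d_{HΔH}(D_{T_0^0}, D_{S_0^0}) + (1/2) d_{HΔH}(D_{T_1^0}, D_{S_1^0}) + λ_0^0 + λ_1^0, where λ_α^0 = ε_{S_α^0}(g*, f) + ε_{T_α^0}(g*, f) for any fixed reference hypothesis g* ∈ H. -/

import Mathlib

open MeasureTheory

/-- Disagreement error `ε_D(h,h') = E_{z∼D}[|h z − h' z|]`. -/
noncomputable def errE {Z : Type*} [MeasurableSpace Z] (μ : Measure Z) (h h' : Z → ℝ) : ℝ :=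
  ∫ z, |h z - h' z| ∂μ

/-- `d_{HΔH}(D,D') = 2 sup_{h,h'∈H} |Pr_D[h≠h'] − Pr_{D'}[h≠h']|`. -/
noncomputable def dHH {Z : Type*} [MeasurableSpace Z] (H : Set (Z → ℝ))
    (μ ν : Measure Z) : ℝ :=
  2 * ⨆ p : H × H,
    |(μ {z | p.1.1 z ≠ p.2.1 z}).toReal - (ν {z | p.1.1 z ≠ p.2.1 z}).toReal|

/-- Equal opportunity distance `Δ_{EOp,D}(g) = |E_{D_0^0}[g] − E_{D_1^0}[g]|`. -/
noncomputable def eopDiff {Z : Type*} [MeasurableSpace Z] (μ0 μ1 : Measure Z)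
    (g : Z → ℝ) : ℝ :=
  |(∫ z, g z ∂μ0) - ∫ z, g z ∂μ1|

/-!
On each group the labelling function vanishes, so the mean of a binary `g` equals `ε(g, f)`,
which by the triangle inequality for `ε` lies within `ε(g*, f)` of `ε(g, g*) = Pr[g ≠ g*]`.
Moving this disagreement probability from the target to the source group costs at most half the
`HΔH`-divergence. Comparing both target group means with the source ones in this way and applying
the triangle inequality to the difference of means gives the bound.
-/

section

variable {Z : Type*} [MeasurableSpace Z]

lemma integrable_of_forall_eq_zero_or_one {μ : Measure Z} [IsFiniteMeasure μ] {g : Z → ℝ}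
    (hm : Measurable g) (hb : ∀ z, g z = 0 ∨ g z = 1) : Integrable g μ := by
  refine Integrable.mono' (integrable_const 1) hm.aestronglyMeasurable (ae_of_all _ fun z => ?_)
  rcases hb z with h | h <;> simp [h]

lemma errE_eq_measureReal_ne (μ : Measure Z) {h h' : Z → ℝ} (hm : Measurable h)
    (hm' : Measurable h') (hb : ∀ z, h z = 0 ∨ h z = 1) (hb' : ∀ z, h' z = 0 ∨ h' z = 1) :
    errE μ h h' = μ.real {z | h z ≠ h' z} := by
  have hs : MeasurableSet {z | h z ≠ h' z} := (measurableSet_eq_fun hm hm').compl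
  have hind : (fun z => |h z - h' z|) = {z | h z ≠ h' z}.indicator 1 := by
    ext z
    rcases hb z with h1 | h1 <;> rcases hb' z with h2 | h2 <;> simp [h1, h2]
  rw [errE, hind, integral_indicator_one hs]

lemma errE_le_errE_add_errE {μ : Measure Z} {h h' k : Z → ℝ} (hi : Integrable h μ)
    (hi' : Integrable h' μ) (hik : Integrable k μ) :
    errE μ h k ≤ errE μ h h' + errE μ h' k := by
  have hhh' : Integrable (fun z => |h z - h' z|) μ := (hi.sub hi').abs
  have hh'k : Integrable (fun z => |h' z - k z|) μ := (hi'.sub hik).abs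
  calc errE μ h k ≤ ∫ z, (|h z - h' z| + |h' z - k z|) ∂μ :=
        integral_mono (hi.sub hik).abs (hhh'.add hh'k) fun z => abs_sub_le (h z) (h' z) (k z)
    _ = errE μ h h' + errE μ h' k := integral_add hhh' hh'k

lemma errE_comm (μ : Measure Z) (h h' : Z → ℝ) : errE μ h h' = errE μ h' h := by
  simp only [errE, abs_sub_comm]

lemma abs_errE_sub_errE_le {μ : Measure Z} {h h' k : Z → ℝ} (hi : Integrable h μ)
    (hi' : Integrable h' μ) (hik : Integrable k μ) :
    |errE μ h k - errE μ h h'| ≤ errE μ h' k := by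
  have hk := errE_le_errE_add_errE hi hi' hik
  have hh' := errE_le_errE_add_errE hi hik hi'
  rw [errE_comm μ k h'] at hh'
  exact abs_sub_le_iff.mpr ⟨by linarith, by linarith⟩

lemma integral_eq_errE_of_ae_eq_zero {μ : Measure Z} {g f : Z → ℝ} (hg : 0 ≤ g)
    (hf : f =ᵐ[μ] fun _ => 0) : ∫ z, g z ∂μ = errE μ g f := by
  refine integral_congr_ae ?_
  filter_upwards [hf] with z hz
  simp [hz, abs_of_nonneg (hg z)]

lemma abs_measureReal_ne_sub_le_half_dHH {H : Set (Z → ℝ)} (μ ν : Measure Z)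
    [IsFiniteMeasure μ] [IsFiniteMeasure ν] {h h' : Z → ℝ} (hh : h ∈ H) (hh' : h' ∈ H) :
    |μ.real {z | h z ≠ h' z} - ν.real {z | h z ≠ h' z}| ≤ (1 / 2) * dHH H μ ν := by
  have hbdd : BddAbove (Set.range fun p : H × H =>
      |μ.real {z | p.1.1 z ≠ p.2.1 z} - ν.real {z | p.1.1 z ≠ p.2.1 z}|) := by
    refine ⟨μ.real Set.univ + ν.real Set.univ, ?_⟩
    rintro _ ⟨p, rfl⟩
    set s := {z | p.1.1 z ≠ p.2.1 z}
    have hμ : μ.real s ≤ μ.real Set.univ := measureReal_mono (Set.subset_univ s)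
    have hν : ν.real s ≤ ν.real Set.univ := measureReal_mono (Set.subset_univ s)
    have hμ0 : 0 ≤ μ.real s := measureReal_nonneg
    have hν0 : 0 ≤ ν.real s := measureReal_nonneg
    exact abs_sub_le_iff.mpr ⟨by linarith, by linarith⟩
  have hle : |μ.real {z | h z ≠ h' z} - ν.real {z | h z ≠ h' z}| ≤ ⨆ p : H × H,
      |(μ {z | p.1.1 z ≠ p.2.1 z}).toReal - (ν {z | p.1.1 z ≠ p.2.1 z}).toReal| :=
    le_ciSup hbdd (⟨h, hh⟩, ⟨h', hh'⟩)
  rw [dHH]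
  linarith

lemma abs_integral_sub_le_half_dHH_add_errE {H : Set (Z → ℝ)}
    (hbin : ∀ h ∈ H, ∀ z, h z = 0 ∨ h z = 1) (hmeas : ∀ h ∈ H, Measurable h)
    (μ ν : Measure Z) [IsFiniteMeasure μ] [IsFiniteMeasure ν] {f : Z → ℝ}
    (hfμ : f =ᵐ[μ] fun _ => 0) (hfν : f =ᵐ[ν] fun _ => 0)
    {g gs : Z → ℝ} (hg : g ∈ H) (hgs : gs ∈ H) :
    |(∫ z, g z ∂μ) - ∫ z, g z ∂ν| ≤ (1 / 2) * dHH H μ ν + (errE ν gs f + errE μ gs f) := by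
  have hg_nonneg : 0 ≤ g := fun z => by rcases hbin g hg z with h | h <;> simp [h]
  have near_disagreement : ∀ (ρ : Measure Z) [IsFiniteMeasure ρ], f =ᵐ[ρ] (fun _ => 0) →
      |(∫ z, g z ∂ρ) - ρ.real {z | g z ≠ gs z}| ≤ errE ρ gs f := by
    intro ρ _ hf
    rw [integral_eq_errE_of_ae_eq_zero hg_nonneg hf,
      ← errE_eq_measureReal_ne ρ (hmeas g hg) (hmeas gs hgs) (hbin g hg) (hbin gs hgs)]
    exact abs_errE_sub_errE_le
      (integrable_of_forall_eq_zero_or_one (hmeas g hg) (hbin g hg))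
      (integrable_of_forall_eq_zero_or_one (hmeas gs hgs) (hbin gs hgs))
      ((integrable_zero Z ℝ ρ).congr hf.symm)
  have hμ := near_disagreement μ hfμ
  have hν := near_disagreement ν hfν
  have hshift := abs_measureReal_ne_sub_le_half_dHH μ ν hg hgs
  rw [abs_le] at hμ hν hshift ⊢
  constructor <;> linarith

end

theorem stmt3_general {Z : Type*} [MeasurableSpace Z] (H : Set (Z → ℝ))
    (hbin : ∀ h ∈ H, ∀ z, h z = 0 ∨ h z = 1)
    (hmeas : ∀ h ∈ H, Measurable h)
    (μS0 μS1 μT0 μT1 : Measure Z)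
    [IsProbabilityMeasure μS0] [IsProbabilityMeasure μS1]
    [IsProbabilityMeasure μT0] [IsProbabilityMeasure μT1]
    (f : Z → ℝ)
    (hfS0 : f =ᵐ[μS0] fun _ => 0) (hfS1 : f =ᵐ[μS1] fun _ => 0)
    (hfT0 : f =ᵐ[μT0] fun _ => 0) (hfT1 : f =ᵐ[μT1] fun _ => 0)
    (g : Z → ℝ) (hg : g ∈ H) (gs : Z → ℝ) (hgs : gs ∈ H) :
    eopDiff μT0 μT1 g ≤
      eopDiff μS0 μS1 g + (1 / 2) * dHH H μT0 μS0 + (1 / 2) * dHH H μT1 μS1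
        + (errE μS0 gs f + errE μT0 gs f) + (errE μS1 gs f + errE μT1 gs f) := by
  have shift0 := abs_integral_sub_le_half_dHH_add_errE hbin hmeas μT0 μS0 hfT0 hfS0 hg hgs
  have shift1 := abs_integral_sub_le_half_dHH_add_errE hbin hmeas μT1 μS1 hfT1 hfS1 hg hgs
  rw [abs_sub_comm] at shift1
  have split_at_S0 := abs_sub_le (∫ z, g z ∂μT0) (∫ z, g z ∂μS0) (∫ z, g z ∂μT1)
  have split_at_S1 := abs_sub_le (∫ z, g z ∂μS0) (∫ z, g z ∂μS1) (∫ z, g z ∂μT1)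
  rw [eopDiff, eopDiff]
  linarith

theorem stmt3 {Z : Type*} [MeasurableSpace Z] (H : Set (Z → ℝ))
    (hbin : ∀ h ∈ H, ∀ z, h z = 0 ∨ h z = 1)
    (hmeas : ∀ h ∈ H, Measurable h)
    (hsym : ∀ h ∈ H, (fun z => 1 - h z) ∈ H)
    (μS0 μS1 μT0 μT1 : Measure Z)
    [IsProbabilityMeasure μS0] [IsProbabilityMeasure μS1]
    [IsProbabilityMeasure μT0] [IsProbabilityMeasure μT1]
    (f : Z → ℝ)
    (hfS0 : f =ᵐ[μS0] fun _ => 0) (hfS1 : f =ᵐ[μS1] fun _ => 0)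
    (hfT0 : f =ᵐ[μT0] fun _ => 0) (hfT1 : f =ᵐ[μT1] fun _ => 0)
    (g : Z → ℝ) (hg : g ∈ H) (gs : Z → ℝ) (hgs : gs ∈ H) :
    eopDiff μT0 μT1 g ≤
      eopDiff μS0 μS1 g + (1 / 2) * dHH H μT0 μS0 + (1 / 2) * dHH H μT1 μS1
        + (errE μS0 gs f + errE μT0 gs f) + (errE μS1 gs f + errE μT1 gs f) :=
  stmt3_general H hbin hmeas μS0 μS1 μT0 μT1 f hfS0 hfS1 hfT0 hfT1 g hg gs hgs
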